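/- arXiv:math-ph/0602015 — 5 statements merged into one kernel-verified Lean document; each statement's English description precedes it below -/
import Mathlib

section
/- For every nonnegative integer k and positive integer N, the number c_k = (1/((k+1)(k+2)))[∏_{j=1}^{k+1}(N+j) − ∏_{j=1}^{k+1}(N−j)] is a nonnegative integer. -/
/-!
Write `A = ∏ (N + j)` and `B = ∏ (N - j)` over `1 ≤ j ≤ k + 1`. Reflecting `j ↦ k + 2 - j`
turns `B` into `∏ (N - (k + 2) + j)`, so `A` and `B` are both products of `k + 1` consecutive
integers, hence divisible by `k + 1`, and they agree modulo `k + 2`. As `k + 1` and `k + 2` are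
coprime, `(k + 1)(k + 2)` divides `A - B`; finally `|N - j| ≤ N + j` gives `B ≤ |B| ≤ A`.
-/

open Finset

namespace Finset

theorem prod_Icc_one_reflect {M : Type*} [CommMonoid M] (f : ℕ → M) (n : ℕ) :
    ∏ j ∈ Icc 1 n, f (n + 1 - j) = ∏ j ∈ Icc 1 n, f j :=
  prod_nbij' (fun j ↦ n + 1 - j) (fun j ↦ n + 1 - j)
    (by intro j hj; simp only [mem_Icc] at hj ⊢; omega)
    (by intro j hj; simp only [mem_Icc] at hj ⊢; omega)
    (by intro j hj; simp only [mem_Icc] at hj; omega)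
    (by intro j hj; simp only [mem_Icc] at hj; omega)
    (fun _ _ ↦ rfl)

theorem prod_sub_le_prod_add {ι R : Type*} [CommRing R] [LinearOrder R]
    [IsStrictOrderedRing R] (s : Finset ι) {f g : ι → R} (hf : ∀ i ∈ s, 0 ≤ f i)
    (hg : ∀ i ∈ s, 0 ≤ g i) : ∏ i ∈ s, (f i - g i) ≤ ∏ i ∈ s, (f i + g i) :=
  calc ∏ i ∈ s, (f i - g i) ≤ |∏ i ∈ s, (f i - g i)| := le_abs_self _
    _ = ∏ i ∈ s, |f i - g i| := abs_prod s _
    _ ≤ ∏ i ∈ s, (f i + g i) := prod_le_prod (fun _ _ ↦ abs_nonneg _) fun i hi ↦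
        (abs_sub (f i) (g i)).trans_eq <| by rw [abs_of_nonneg (hf i hi), abs_of_nonneg (hg i hi)]

end Finset

namespace Int

theorem prod_Icc_sub_eq_prod_Icc_add (a : ℤ) (n : ℕ) :
    ∏ j ∈ Icc 1 n, (a - j) = ∏ j ∈ Icc 1 n, (a - (n + 1) + j) := by
  rw [← prod_Icc_one_reflect]
  refine prod_congr rfl fun j hj ↦ ?_
  have hjn : j ≤ n + 1 := by simp only [mem_Icc] at hj; omega
  push_cast [Nat.cast_sub hjn]
  ring

theorem exists_mem_Icc_natCast_dvd_add (a : ℤ) {n : ℕ} (hn : 0 < n) :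
    ∃ j ∈ Icc 1 n, (n : ℤ) ∣ a + j := by
  have hn' : (0 : ℤ) < n := by exact_mod_cast hn
  have h0 := emod_nonneg (-a - 1) hn'.ne'
  have h1 := emod_lt_of_pos (-a - 1) hn'
  refine ⟨((-a - 1) % n).toNat + 1, mem_Icc.2 ⟨by omega, by omega⟩, ?_⟩
  rw [← modEq_zero_iff_dvd]
  push_cast [toNat_of_nonneg h0]
  calc a + ((-a - 1) % n + 1) ≡ a + ((-a - 1) + 1) [ZMOD n] :=
        ((mod_modEq _ _).add_right 1).add_left a
    _ = 0 := by ring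

theorem natCast_dvd_prod_Icc_add (a : ℤ) {n : ℕ} (hn : 0 < n) :
    (n : ℤ) ∣ ∏ j ∈ Icc 1 n, (a + j) := by
  obtain ⟨j, hj, hdvd⟩ := exists_mem_Icc_natCast_dvd_add a hn
  exact hdvd.trans (dvd_prod_of_mem (fun j : ℕ ↦ a + j) hj)

theorem natCast_dvd_prod_Icc_sub (a : ℤ) {n : ℕ} (hn : 0 < n) :
    (n : ℤ) ∣ ∏ j ∈ Icc 1 n, (a - j) := by
  rw [prod_Icc_sub_eq_prod_Icc_add]
  exact natCast_dvd_prod_Icc_add _ hn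

theorem prod_Icc_sub_modEq_prod_Icc_add (a : ℤ) (n : ℕ) :
    ∏ j ∈ Icc 1 n, (a - j) ≡ ∏ j ∈ Icc 1 n, (a + j) [ZMOD n + 1] := by
  rw [prod_Icc_sub_eq_prod_Icc_add]
  exact ModEq.prod fun j _ ↦ modEq_iff_dvd.2 ⟨1, by ring⟩

theorem mul_succ_dvd_prod_Icc_add_sub_prod_Icc_sub (a : ℤ) {n : ℕ} (hn : 0 < n) :
    (n * (n + 1) : ℤ) ∣ ∏ j ∈ Icc 1 n, (a + j) - ∏ j ∈ Icc 1 n, (a - j) :=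
  IsCoprime.mul_dvd ⟨-1, 1, by ring⟩
    (dvd_sub (natCast_dvd_prod_Icc_add a hn) (natCast_dvd_prod_Icc_sub a hn))
    (prod_Icc_sub_modEq_prod_Icc_add a n).dvd

end Int

theorem stmt_2_general (N : ℕ) (k : ℕ) :
    ∃ m : ℕ,
      ((∏ j ∈ Finset.Icc 1 (k+1), ((N : ℚ) + j)) -
        ∏ j ∈ Finset.Icc 1 (k+1), ((N : ℚ) - j)) / (((k:ℚ)+1) * ((k:ℚ)+2))
      = (m : ℚ) := by
  set A : ℤ := ∏ j ∈ Icc 1 (k + 1), ((N : ℤ) + j)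
  set B : ℤ := ∏ j ∈ Icc 1 (k + 1), ((N : ℤ) - j)
  obtain ⟨t, ht⟩ : ((k + 1) * (k + 2) : ℤ) ∣ A - B := by
    simpa [add_assoc, one_add_one_eq_two] using
      Int.mul_succ_dvd_prod_Icc_add_sub_prod_Icc_sub (N : ℤ) k.succ_pos
  have hBA : B ≤ A := prod_sub_le_prod_add _ (fun _ _ ↦ by positivity) fun _ _ ↦ by positivity
  have ht0 : 0 ≤ t := nonneg_of_mul_nonneg_right (ht ▸ sub_nonneg.2 hBA) (by positivity)
  lift t to ℕ using ht0
  refine ⟨t, (div_eq_iff (by positivity)).2 ?_⟩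
  have htq : ((A - B : ℤ) : ℚ) = ((((k + 1) * (k + 2) : ℤ) * (t : ℤ) : ℤ) : ℚ) := by rw [ht]
  push_cast [A, B] at htq
  linear_combination htq

/-- For every nonnegative integer `k` and positive integer `N`, the number
`c_k = (1/((k+1)(k+2)))[∏_{j=1}^{k+1}(N+j) − ∏_{j=1}^{k+1}(N−j)]` is a
nonnegative integer. -/
theorem stmt_2 (N : ℕ) (hN : 0 < N) (k : ℕ) :
    ∃ m : ℕ,
      ((∏ j ∈ Finset.Icc 1 (k+1), ((N : ℚ) + j)) -
        ∏ j ∈ Finset.Icc 1 (k+1), ((N : ℚ) - j)) / (((k:ℚ)+1) * ((k:ℚ)+2))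
      = (m : ℚ) :=
  stmt_2_general N k
end

section
/- For the normalized Haar measure on U(N) and any fixed indices a, b, j, k, l ∈ {1,…,N}, one has ∫_{U(N)} u_{al} ū_{jl} u_{kl} ū_{bl} dU = (δ_{aj}δ_{kb} + δ_{ab}δ_{kj}) / (N(N+1)), where u_{ij} denotes the (i,j) matrix entry of U. -/
/-!
Left multiplication by a fixed unitary `V` preserves the Haar measure and acts on the column
`u = U e_l` by `u ↦ V u`. Multiplying one row by a phase kills every moment
`E[u_a ū_j u_k ū_b]` in which the multisets `{a, k}` and `{j, b}` differ. Householder reflections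
in the `(a, k)`-plane show that `E|u_a|⁴` does not depend on `a` and equals `2 E|u_a|²|u_k|²` for
`a ≠ k`. Since `Σ_x |u_x|² = 1`, summing `E|u_x|²|u_y|²` over all `x, y` gives `1`, which forces
`E|u_a|⁴ = 2 / (N (N + 1))`.
-/

open MeasureTheory Matrix ComplexConjugate

theorem Continuous.integrable_of_compactSpace {X E : Type*} [TopologicalSpace X] [CompactSpace X]
    [MeasurableSpace X] [OpensMeasurableSpace X] [NormedAddCommGroup E] {μ : Measure X}
    [IsFiniteMeasure μ] {f : X → E} (hf : Continuous f) : Integrable f μ :=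
  hf.integrable_of_hasCompactSupport (.of_compactSpace f)

theorem MeasureTheory.integral_eq_zero_of_mul_left_eq_const_mul {G 𝕜 : Type*} [Group G]
    [MeasurableSpace G] [MeasurableMul G] {μ : Measure G} [μ.IsMulLeftInvariant] [RCLike 𝕜]
    {f : G → 𝕜} {g : G} {c : 𝕜} (hc : c ≠ 1) (hf : ∀ x, f (g * x) = c * f x) :
    ∫ x, f x ∂μ = 0 := by
  have h := integral_mul_left_eq_self (μ := μ) f g
  simp only [hf, integral_const_mul] at h
  by_contra h0
  exact hc ((mul_eq_right₀ h0).mp h)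

theorem Complex.quartic_of_real_combination (α β : ℝ) (x y : ℂ) :
    (α * x + β * y) * conj (α * x + β * y) * (α * x + β * y) * conj (α * x + β * y) =
      α ^ 4 * (x * conj x * x * conj x) + β ^ 4 * (y * conj y * y * conj y) +
      4 * α ^ 2 * β ^ 2 * (x * conj x * y * conj y) +
      2 * α * β * ((α ^ 2 * (x * conj x) + β ^ 2 * (y * conj y)) * (x * conj y + conj x * y)) +
      α ^ 2 * β ^ 2 * ((x * conj y) ^ 2 + (conj x * y) ^ 2) := by
  simp only [map_add, map_mul, Complex.conj_ofReal]
  ring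

namespace Matrix

variable {n : Type*} [Fintype n] [DecidableEq n]

theorem diagonal_mem_unitaryGroup {α : Type*} [CommRing α] [StarRing α] {d : n → α}
    (hd : ∀ i, star (d i) * d i = 1) : diagonal d ∈ unitaryGroup n α := by
  rw [mem_unitaryGroup_iff', star_eq_conjTranspose, diagonal_conjTranspose, diagonal_mul_diagonal]
  simp [hd]

namespace UnitaryGroup

instance {𝕜 : Type*} [RCLike 𝕜] : CompactSpace (unitaryGroup n 𝕜) :=
  isCompact_iff_compactSpace.mp <| .of_isClosed_subset
    (isCompact_univ_pi fun _ => isCompact_univ_pi fun _ => ProperSpace.isCompact_closedBall 0 1)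
    isClosed_unitary fun _ hU i _ j _ => by simpa using entry_norm_bound_of_unitary hU i j

@[fun_prop]
theorem continuous_entry {𝕜 : Type*} [RCLike 𝕜] (i j : n) :
    Continuous fun U : unitaryGroup n 𝕜 => U.1 i j :=
  (continuous_apply_apply i j).comp continuous_subtype_val

theorem sum_mul_conj_col (U : unitaryGroup n ℂ) (l : n) : ∑ i, U.1 i l * conj (U.1 i l) = 1 := by
  have h := congr_fun₂ (mem_unitaryGroup_iff'.mp U.2) l l
  simp only [Matrix.mul_apply, Matrix.star_apply, one_apply_eq, RCLike.star_def] at h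
  simpa only [mul_comm] using h

noncomputable def rowPhase (c : n) (ζ : ℂ) (hζ : conj ζ * ζ = 1) : unitaryGroup n ℂ :=
  ⟨diagonal (Function.update 1 c ζ), diagonal_mem_unitaryGroup fun i => by
    rcases eq_or_ne i c with rfl | h <;> simp [*]⟩

theorem rowPhase_mul_apply (c : n) (ζ : ℂ) (hζ : conj ζ * ζ = 1) (U : unitaryGroup n ℂ)
    (i j : n) : (rowPhase c ζ hζ * U).1 i j = (if i = c then ζ else 1) * U.1 i j := by
  simp [rowPhase, diagonal_mul, Function.update_apply]

-- For `v = 0` the coefficient is `2 / 0 = 0`, so `householder 0 = 1`.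
noncomputable def householder (v : n → ℝ) : unitaryGroup n ℂ :=
  ⟨1 - ((2 / (v ⬝ᵥ v) : ℝ) : ℂ) • vecMulVec (fun i => (v i : ℂ)) (fun i => (v i : ℂ)), by
    set c : ℝ := 2 / (v ⬝ᵥ v)
    set w : n → ℂ := fun i => (v i : ℂ)
    have hw : star w = w := funext fun i => Complex.conj_ofReal _
    have hww : vecMulVec w w * vecMulVec w w = ((v ⬝ᵥ v : ℝ) : ℂ) • vecMulVec w w := by
      rw [vecMulVec_mul_vecMulVec, vecMulVec_smul]
      simp [w, dotProduct]
    have hc : c * c * (v ⬝ᵥ v) = 2 * c := by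
      rcases eq_or_ne (v ⬝ᵥ v) 0 with h | h
      · simp [c, h]
      · rw [mul_assoc, div_mul_cancel₀ 2 h, mul_comm]
    rw [mem_unitaryGroup_iff', star_eq_conjTranspose, conjTranspose_sub, conjTranspose_one,
      conjTranspose_smul, conjTranspose_vecMulVec, hw, Complex.star_def, Complex.conj_ofReal,
      sub_mul, mul_sub, mul_sub, smul_mul_smul, hww, smul_smul, ← Complex.ofReal_mul,
      ← Complex.ofReal_mul, hc, mul_one, one_mul, mul_one, Complex.ofReal_mul]
    module⟩

theorem householder_mul_apply (v : n → ℝ) (U : unitaryGroup n ℂ) (i j : n) :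
    (householder v * U).1 i j = U.1 i j - 2 / (v ⬝ᵥ v : ℝ) * v i * ∑ m, v m * U.1 m j := by
  simp [householder, sub_mul, vecMulVec_mul, vecMul, dotProduct, vecMulVec_apply, mul_assoc]

theorem householder_single_add_single_mul_apply {a k : n} (hak : a ≠ k) (t : ℝ)
    (U : unitaryGroup n ℂ) (l : n) :
    (householder (Pi.single a 1 + Pi.single k t) * U).1 a l =
      ((t ^ 2 - 1) / (t ^ 2 + 1) : ℝ) * U.1 a l + (-2 * t / (t ^ 2 + 1) : ℝ) * U.1 k l := by
  set v : n → ℝ := Pi.single a 1 + Pi.single k t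
  have hvv : v ⬝ᵥ v = t ^ 2 + 1 := by
    simp [v, dotProduct_add, hak, Ne.symm hak, sq, add_comm]
  have hv : ∑ m, (v m : ℂ) * U.1 m l = U.1 a l + t * U.1 k l := by
    simp only [v, Pi.add_apply, Complex.ofReal_add, add_mul, Finset.sum_add_distrib]
    simp [Pi.single_apply, apply_ite Complex.ofReal, ite_mul]
  have ht : (t : ℂ) ^ 2 + 1 ≠ 0 := by norm_cast; positivity
  have hva : v a = 1 := by simp [v, hak]
  rw [householder_mul_apply, hv, hvv, hva]
  push_cast
  field_simp
  ring

variable [MeasurableSpace (unitaryGroup n ℂ)] (μ : Measure (unitaryGroup n ℂ))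

noncomputable def colMoment (l x y z w : n) : ℂ :=
  ∫ U, U.1 x l * conj (U.1 y l) * U.1 z l * conj (U.1 w l) ∂μ

theorem colMoment_comm (l x y z w : n) : colMoment μ l x y z w = colMoment μ l x w z y := by
  unfold colMoment
  congr 1 with U
  ring

variable [BorelSpace (unitaryGroup n ℂ)]

theorem sum_sum_colMoment [IsProbabilityMeasure μ] (l : n) :
    ∑ x, ∑ k, colMoment μ l x x k k = 1 := by
  have hint {f : unitaryGroup n ℂ → ℂ} (hf : Continuous f) : Integrable f μ :=
    hf.integrable_of_compactSpace
  have hcol (U : unitaryGroup n ℂ) :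
      ∑ x, ∑ k, U.1 x l * conj (U.1 x l) * U.1 k l * conj (U.1 k l) = 1 := by
    simp_rw [mul_assoc, ← Finset.mul_sum, ← mul_assoc, ← Finset.sum_mul, sum_mul_conj_col, one_mul]
  calc ∑ x, ∑ k, colMoment μ l x x k k
      = ∫ U, ∑ x, ∑ k, U.1 x l * conj (U.1 x l) * U.1 k l * conj (U.1 k l) ∂μ := by
        rw [integral_finsetSum _ fun x _ => hint (by fun_prop)]
        congr with x
        rw [integral_finsetSum _ fun k _ => hint (by fun_prop)]
        rfl
    _ = 1 := by simp [hcol]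

variable [μ.IsMulLeftInvariant]

theorem colMoment_eq_zero_of_rowPhase {l x y z w : n} (c : n) {ζ : ℂ} (hζ : conj ζ * ζ = 1)
    (h : (if x = c then ζ else 1) * conj (if y = c then ζ else 1) * (if z = c then ζ else 1) *
      conj (if w = c then ζ else 1) ≠ 1) :
    colMoment μ l x y z w = 0 :=
  integral_eq_zero_of_mul_left_eq_const_mul (g := rowPhase c ζ hζ) h fun U => by
    simp only [rowPhase_mul_apply, map_mul]
    ring

theorem colMoment_eq_zero {l x y z w : n} (h : ¬(x = y ∧ z = w ∨ x = w ∧ z = y)) :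
    colMoment μ l x y z w = 0 := by
  have hI : conj Complex.I * Complex.I = 1 := by simp
  by_cases hxy : x = y
  · subst hxy
    have hzw : z ≠ w := by tauto
    refine colMoment_eq_zero_of_rowPhase μ w hI ?_
    by_cases hxw : x = w <;> simp [hxw, hzw, Complex.ext_iff]
  by_cases hxw : x = w
  · subst hxw
    have hzy : z ≠ y := by tauto
    refine colMoment_eq_zero_of_rowPhase μ y hI ?_
    simp [hxy, hzy, Complex.ext_iff]
  · refine colMoment_eq_zero_of_rowPhase μ x hI ?_
    by_cases hzx : z = x <;> norm_num [Ne.symm hxy, Ne.symm hxw, hzx, Complex.ext_iff]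

theorem colMoment_self_eq_of_mul_apply [IsFiniteMeasure μ] {x a k l : n} (hak : a ≠ k)
    (V : unitaryGroup n ℂ) (α β : ℝ) (hV : ∀ U, (V * U).1 x l = α * U.1 a l + β * U.1 k l) :
    colMoment μ l x x x x = α ^ 4 * colMoment μ l a a a a + β ^ 4 * colMoment μ l k k k k +
      4 * α ^ 2 * β ^ 2 * colMoment μ l a a k k := by
  have hint {f : unitaryGroup n ℂ → ℂ} (hf : Continuous f) : Integrable f μ :=
    hf.integrable_of_compactSpace
  -- The cross terms change sign when row `a` is multiplied by `-1`, resp. by `i`.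
  have hodd₁ : ∫ U, (α ^ 2 * (U.1 a l * conj (U.1 a l)) + β ^ 2 * (U.1 k l * conj (U.1 k l))) *
      (U.1 a l * conj (U.1 k l) + conj (U.1 a l) * U.1 k l) ∂μ = 0 :=
    integral_eq_zero_of_mul_left_eq_neg (g := rowPhase a (-1) (by simp)) fun U => by
      simp only [rowPhase_mul_apply, if_pos, if_neg (Ne.symm hak), map_mul, map_neg, map_one]
      ring
  have hodd₂ : ∫ U, ((U.1 a l * conj (U.1 k l)) ^ 2 + (conj (U.1 a l) * U.1 k l) ^ 2) ∂μ = 0 :=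
    integral_eq_zero_of_mul_left_eq_neg (g := rowPhase a Complex.I (by simp)) fun U => by
      simp only [rowPhase_mul_apply, if_pos, if_neg (Ne.symm hak), map_mul, map_one,
        Complex.conj_I]
      linear_combination ((U.1 a l * conj (U.1 k l)) ^ 2 + (conj (U.1 a l) * U.1 k l) ^ 2) *
        Complex.I_sq
  rw [colMoment, ← integral_mul_left_eq_self _ V]
  simp only [hV, Complex.quartic_of_real_combination]
  rw [integral_add (hint (by fun_prop)) (hint (by fun_prop)),
    integral_add (hint (by fun_prop)) (hint (by fun_prop)),
    integral_add (hint (by fun_prop)) (hint (by fun_prop)),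
    integral_add (hint (by fun_prop)) (hint (by fun_prop))]
  simp only [integral_const_mul, hodd₁, hodd₂, colMoment]
  ring

theorem colMoment_self_eq [IsFiniteMeasure μ] (l a k : n) :
    colMoment μ l a a a a = colMoment μ l k k k k := by
  rcases eq_or_ne a k with rfl | hak
  · rfl
  have h := colMoment_self_eq_of_mul_apply μ hak _ _ _
    (householder_single_add_single_mul_apply hak 1 · l)
  norm_num at h
  exact h

theorem colMoment_pair_eq_half [IsFiniteMeasure μ] {a k : n} (hak : a ≠ k) (l : n) :
    colMoment μ l a a k k = colMoment μ l a a a a / 2 := by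
  -- `t = 2` gives the Pythagorean coefficients `3/5, -4/5`, both nonzero.
  have h := colMoment_self_eq_of_mul_apply μ hak _ _ _
    (householder_single_add_single_mul_apply hak 2 · l)
  norm_num at h
  linear_combination (-625 / 576 : ℂ) * h + (256 / 576 : ℂ) * colMoment_self_eq μ l a k

theorem colMoment_self [IsProbabilityMeasure μ] (l a : n) :
    colMoment μ l a a a a = 2 / (Fintype.card n * (Fintype.card n + 1)) := by
  set D := colMoment μ l a a a a
  have hpair (x k : n) : colMoment μ l x x k k = D / 2 + if x = k then D / 2 else 0 := by
    rcases eq_or_ne x k with rfl | hxk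
    · rw [colMoment_self_eq μ l x a]; simp [D]
    · rw [colMoment_pair_eq_half μ hxk, colMoment_self_eq μ l x a]; simp [hxk, D]
  have h := sum_sum_colMoment μ l
  simp only [hpair, Finset.sum_add_distrib, Finset.sum_ite_eq, Finset.mem_univ, if_true,
    Finset.sum_const, Finset.card_univ, nsmul_eq_mul] at h
  have hN : (Fintype.card n : ℂ) ≠ 0 := Nat.cast_ne_zero.mpr (Fintype.card_pos_iff.mpr ⟨a⟩).ne'
  have hN1 : (Fintype.card n : ℂ) + 1 ≠ 0 := Nat.cast_add_one_ne_zero _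
  field_simp
  linear_combination 2 * h

theorem colMoment_pair [IsProbabilityMeasure μ] {a k : n} (hak : a ≠ k) (l : n) :
    colMoment μ l a a k k = 1 / (Fintype.card n * (Fintype.card n + 1)) := by
  rw [colMoment_pair_eq_half μ hak, colMoment_self]
  ring

theorem colMoment_eq [IsProbabilityMeasure μ] (l a j k b : n) :
    colMoment μ l a j k b = ((if a = j then 1 else 0) * (if k = b then 1 else 0) +
      (if a = b then 1 else 0) * (if k = j then 1 else 0)) /
        (Fintype.card n * (Fintype.card n + 1)) := by
  by_cases h : a = j ∧ k = b ∨ a = b ∧ k = j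
  swap
  · rw [colMoment_eq_zero μ h]
    split_ifs <;> simp_all
  rcases h with ⟨rfl, rfl⟩ | ⟨rfl, rfl⟩ <;> rcases eq_or_ne a k with rfl | hak
  · rw [colMoment_self]; norm_num
  · rw [colMoment_pair μ hak]; simp [hak, Ne.symm hak]
  · rw [colMoment_self]; norm_num
  · rw [colMoment_comm, colMoment_pair μ hak]; simp [hak, Ne.symm hak]

end UnitaryGroup

end Matrix

theorem stmt_8_general (N : ℕ)
    [MeasurableSpace (Matrix.unitaryGroup (Fin N) ℂ)]
    [BorelSpace (Matrix.unitaryGroup (Fin N) ℂ)]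
    (μ : Measure (Matrix.unitaryGroup (Fin N) ℂ))
    [IsProbabilityMeasure μ]
    (hleft : ∀ V : Matrix.unitaryGroup (Fin N) ℂ,
      MeasurePreserving (fun U => V * U) μ μ)
    (a b j k l : Fin N) :
    (∫ U : Matrix.unitaryGroup (Fin N) ℂ,
        (U : Matrix (Fin N) (Fin N) ℂ) a l *
          (starRingEnd ℂ) ((U : Matrix (Fin N) (Fin N) ℂ) j l) *
          (U : Matrix (Fin N) (Fin N) ℂ) k l *
          (starRingEnd ℂ) ((U : Matrix (Fin N) (Fin N) ℂ) b l) ∂μ)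
      = ((if a = j then 1 else 0) * (if k = b then 1 else 0) +
          (if a = b then 1 else 0) * (if k = j then 1 else 0)) /
          ((N : ℂ) * ((N : ℂ) + 1)) := by
  have : μ.IsMulLeftInvariant := ⟨fun V => (hleft V).map_eq⟩
  have h := Matrix.UnitaryGroup.colMoment_eq μ l a j k b
  rw [Fintype.card_fin] at h
  exact h

/-- For the normalized Haar measure on `U(N)` and fixed indices `a, b, j, k, l`,
`∫_{U(N)} u_{al} ū_{jl} u_{kl} ū_{bl} dU = (δ_{aj}δ_{kb} + δ_{ab}δ_{kj}) / (N(N+1))`. -/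
theorem stmt_8 (N : ℕ) (hN : 0 < N)
    [MeasurableSpace (Matrix.unitaryGroup (Fin N) ℂ)]
    [BorelSpace (Matrix.unitaryGroup (Fin N) ℂ)]
    (μ : Measure (Matrix.unitaryGroup (Fin N) ℂ))
    [IsProbabilityMeasure μ]
    (hleft : ∀ V : Matrix.unitaryGroup (Fin N) ℂ,
      MeasurePreserving (fun U => V * U) μ μ)
    (hright : ∀ V : Matrix.unitaryGroup (Fin N) ℂ,
      MeasurePreserving (fun U => U * V) μ μ)
    (a b j k l : Fin N) :
    (∫ U : Matrix.unitaryGroup (Fin N) ℂ,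
        (U : Matrix (Fin N) (Fin N) ℂ) a l *
          (starRingEnd ℂ) ((U : Matrix (Fin N) (Fin N) ℂ) j l) *
          (U : Matrix (Fin N) (Fin N) ℂ) k l *
          (starRingEnd ℂ) ((U : Matrix (Fin N) (Fin N) ℂ) b l) ∂μ)
      = ((if a = j then 1 else 0) * (if k = b then 1 else 0) +
          (if a = b then 1 else 0) * (if k = j then 1 else 0)) /
          ((N : ℂ) * ((N : ℂ) + 1)) :=
  stmt_8_general N μ hleft a b j k l
end

section
/- A ℂ^{N×N}-valued function φ on the set of normal N×N matrices is U-invariant (i.e., φ(UZU*) = Uφ(Z)U* for all unitary U and normal Z) if and only if there exists a function f(d_1; d_2, …, d_N): ℂ × ℂ^{N−1} → ℂ, symmetric in its last N−1 variables, such that φ(UDU*) = U·diag_j(f(d_j; d_1,…,d̂_j,…,d_N))·U* for all unitary U and diagonal D = diag(d_1,…,d_N); moreover f is uniquely determined by φ. -/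
/-!
Conjugation by a permutation matrix permutes the diagonal of a diagonal matrix, and conjugation
by a diagonal sign matrix fixes it. Invariance therefore forces `φ (diagonal d)` to be diagonal,
its `j`-th entry being the `0`-th entry of `φ (diagonal (d ∘ swap 0 j))`; this defines `f`.
Conversely, a normal matrix is unitarily diagonalizable (its real and imaginary parts are commuting
Hermitian matrices, hence have a common orthonormal eigenbasis), so a covariant formula on
diagonal matrices determines an invariant `φ`.
-/

open Matrix Module.End

theorem LinearMap.IsSymmetric.exists_orthonormalBasis_eigenvectors_of_commute
    {𝕜 E : Type*} [RCLike 𝕜] [NormedAddCommGroup E] [InnerProductSpace 𝕜 E]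
    [FiniteDimensional 𝕜 E] {n : ℕ} (hn : Module.finrank 𝕜 E = n)
    {A B : E →ₗ[𝕜] E} (hA : A.IsSymmetric) (hB : B.IsSymmetric) (hAB : Commute A B) :
    ∃ (b : OrthonormalBasis (Fin n) 𝕜 E) (α β : Fin n → 𝕜),
      ∀ i, A (b i) = α i • b i ∧ B (b i) = β i • b i := by
  classical
  let W : 𝕜 × 𝕜 → Submodule 𝕜 E := fun p => eigenspace A p.2 ⊓ eigenspace B p.1
  have hW : DirectSum.IsInternal W := hA.directSum_isInternal_of_commute hB hAB
  let _ : Fintype {p // W p ≠ ⊥} := hW.submodule_iSupIndep.fintypeNeBotOfFiniteDimensional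
  -- `subordinateOrthonormalBasis` needs a finite index set: keep the nonzero joint eigenspaces
  have hW' : DirectSum.IsInternal fun p : {p // W p ≠ ⊥} => W p :=
    DirectSum.isInternal_ne_bot_iff.mpr hW
  have hWorth := (hA.orthogonalFamily_eigenspace_inf_eigenspace hB).comp
    (Subtype.val_injective (p := fun p => W p ≠ ⊥))
  let p i := (hW'.subordinateOrthonormalBasisIndex hn i hWorth).1
  refine ⟨hW'.subordinateOrthonormalBasis hn hWorth, fun i => (p i).2, fun i => (p i).1,
    fun i => ?_⟩
  have hmem := hW'.subordinateOrthonormalBasis_subordinate hn i hWorth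
  exact ⟨mem_eigenspace_iff.mp hmem.1, mem_eigenspace_iff.mp hmem.2⟩

namespace Matrix

variable {𝕜 n : Type*} [RCLike 𝕜] [Fintype n] [DecidableEq n]

theorem exists_unitary_conj_diagonal_of_orthonormalBasis
    {Z : Matrix n n 𝕜} (b : OrthonormalBasis n 𝕜 (EuclideanSpace 𝕜 n)) (μ : n → 𝕜)
    (hb : ∀ j, Z *ᵥ b j = μ j • b j) :
    ∃ U : unitaryGroup n 𝕜, Z = (U : Matrix n n 𝕜) * diagonal μ * (U : Matrix n n 𝕜)ᴴ := by
  let e := EuclideanSpace.basisFun n 𝕜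
  let V := e.toBasis.toMatrix b
  have hV : ∀ i j, V i j = b j i := fun _ _ => rfl
  have hZV : Z * V = V * diagonal μ := by
    ext i j
    rw [mul_diagonal, mul_apply, hV, mul_comm]
    simpa only [hV, mulVec, dotProduct, Pi.smul_apply, smul_eq_mul] using congrFun (hb j) i
  refine ⟨⟨V, e.toMatrix_orthonormalBasis_mem_unitary b⟩, ?_⟩
  calc Z = Z * V * Vᴴ := by
        rw [mul_assoc, e.toMatrix_orthonormalBasis_self_mul_conjTranspose, mul_one]
    _ = V * diagonal μ * Vᴴ := by rw [hZV]

open ComplexStarModule in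
theorem exists_unitary_conj_diagonal_of_normal {Z : Matrix n n ℂ}
    (hZ : Zᴴ * Z = Z * Zᴴ) :
    ∃ (U : unitaryGroup n ℂ) (d : n → ℂ),
      Z = (U : Matrix n n ℂ) * diagonal d * (U : Matrix n n ℂ)ᴴ := by
  have : IsStarNormal Z := ⟨hZ⟩
  have hA : (toEuclideanLin (ℜ Z : Matrix n n ℂ)).IsSymmetric :=
    isSymmetric_toEuclideanLin_iff.mpr (ℜ Z).2
  have hB : (toEuclideanLin (ℑ Z : Matrix n n ℂ)).IsSymmetric :=
    isSymmetric_toEuclideanLin_iff.mpr (ℑ Z).2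
  have hAB :
      Commute (toEuclideanLin (ℜ Z : Matrix n n ℂ)) (toEuclideanLin (ℑ Z : Matrix n n ℂ)) :=
    (Commute.realPart_imaginaryPart Z).map (toLpLinAlgEquiv 2)
  have hn : Module.finrank ℂ (EuclideanSpace ℂ n) = Fintype.card n := finrank_euclideanSpace
  obtain ⟨b, α, β, hb⟩ := hA.exists_orthonormalBasis_eigenvectors_of_commute hn hB hAB
  let e : Fin (Fintype.card n) ≃ n := Fintype.equivOfCardEq (Fintype.card_fin _)
  suffices ∀ j, Z *ᵥ b.reindex e j = (α (e.symm j) + Complex.I * β (e.symm j)) • b.reindex e j by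
    obtain ⟨U, hU⟩ := exists_unitary_conj_diagonal_of_orthonormalBasis _ _ this
    exact ⟨U, _, hU⟩
  intro j
  obtain ⟨hα, hβ⟩ := hb (e.symm j)
  have := congrArg WithLp.ofLp (congrArg₂ (· + Complex.I • ·) hα hβ)
  rw [← realPart_add_I_smul_imaginaryPart Z]
  simpa only [OrthonormalBasis.coe_reindex, Function.comp_apply, add_mulVec, smul_mulVec,
    add_smul, toLpLin_apply, WithLp.ofLp_add, WithLp.ofLp_smul, smul_smul] using this

section Conjugation

variable {R : Type*} [CommRing R] [StarRing R]

theorem permMatrix_mem_unitaryGroup (σ : Equiv.Perm n) : σ.permMatrix R ∈ unitaryGroup n R := by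
  rw [mem_unitaryGroup_iff', star_eq_conjTranspose, conjTranspose_permMatrix, ← permMatrix_mul,
    mul_inv_cancel, permMatrix_one]

theorem permMatrix_mul_mul_conjTranspose_permMatrix (σ : Equiv.Perm n) (M : Matrix n n R) :
    σ.permMatrix R * M * (σ.permMatrix R)ᴴ = M.submatrix σ σ := by
  rw [conjTranspose_permMatrix, Equiv.Perm.permMatrix, Equiv.Perm.permMatrix,
    PEquiv.toMatrix_toPEquiv_mul, PEquiv.mul_toMatrix_toPEquiv, submatrix_submatrix]
  rfl

theorem diagonal_mul_diagonal_mul_conjTranspose_of_mem_unitaryGroup {v : n → R}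
    (hv : diagonal v ∈ unitaryGroup n R) (d : n → R) :
    diagonal v * diagonal d * (diagonal v)ᴴ = diagonal d := by
  rw [(commute_diagonal v d).eq, mul_assoc, ← star_eq_conjTranspose, mem_unitaryGroup_iff.mp hv,
    mul_one]

theorem commute_conjTranspose_diagonal (d : n → R) : Commute (diagonal d)ᴴ (diagonal d) := by
  rw [diagonal_conjTranspose]
  exact commute_diagonal _ _

theorem IsDiag.of_forall_diagonal_mem_unitaryGroup [IsAddTorsionFree R] {M : Matrix n n R}
    (hM : ∀ v : n → R, diagonal v ∈ unitaryGroup n R → diagonal v * M * (diagonal v)ᴴ = M) :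
    M.IsDiag := by
  intro i j hij
  let w : n → R := Pi.mulSingle j (-1)
  have hw : ∀ k, star (w k) * w k = 1 := by
    intro k
    by_cases hk : k = j <;> simp [w, hk]
  have hwU : diagonal w ∈ unitaryGroup n R := by
    rw [mem_unitaryGroup_iff', star_eq_conjTranspose, diagonal_conjTranspose,
      diagonal_mul_diagonal, ← diagonal_one]
    exact congrArg diagonal (funext hw)
  have := congrFun₂ (hM w hwU) i j
  simp only [diagonal_conjTranspose, mul_diagonal, diagonal_mul, Pi.star_apply, w,
    Pi.mulSingle_eq_same, Pi.mulSingle_eq_of_ne hij, star_one, star_neg, one_mul, mul_neg,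
    mul_one] at this
  exact neg_eq_self.mp this

def IsUnitarilyInvariant (φ : Matrix n n R → Matrix n n R) : Prop :=
  ∀ (U : unitaryGroup n R) (Z : Matrix n n R), Zᴴ * Z = Z * Zᴴ →
    φ ((U : Matrix n n R) * Z * (U : Matrix n n R)ᴴ)
      = (U : Matrix n n R) * φ Z * (U : Matrix n n R)ᴴ

namespace IsUnitarilyInvariant

variable {φ : Matrix n n R → Matrix n n R}

theorem apply_diagonal_comp_perm (h : IsUnitarilyInvariant φ) (σ : Equiv.Perm n) (d : n → R) :
    φ (diagonal (d ∘ σ)) = (φ (diagonal d)).submatrix σ σ := by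
  have := h ⟨_, permMatrix_mem_unitaryGroup σ⟩ (diagonal d) (commute_conjTranspose_diagonal d)
  rwa [permMatrix_mul_mul_conjTranspose_permMatrix, permMatrix_mul_mul_conjTranspose_permMatrix,
    submatrix_diagonal_equiv] at this

theorem isDiag_apply_diagonal [IsAddTorsionFree R] (h : IsUnitarilyInvariant φ) (d : n → R) :
    (φ (diagonal d)).IsDiag :=
  IsDiag.of_forall_diagonal_mem_unitaryGroup fun v hv => by
    have := h ⟨_, hv⟩ (diagonal d) (commute_conjTranspose_diagonal d)
    rw [diagonal_mul_diagonal_mul_conjTranspose_of_mem_unitaryGroup hv] at this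
    exact this.symm

theorem apply_diagonal [IsAddTorsionFree R] (h : IsUnitarilyInvariant φ) (i₀ : n) (d : n → R) :
    φ (diagonal d) = diagonal fun j => φ (diagonal (d ∘ Equiv.swap i₀ j)) i₀ i₀ := by
  conv_lhs => rw [← (h.isDiag_apply_diagonal d).diagonal_diag]
  congr 1
  funext j
  rw [h.apply_diagonal_comp_perm, submatrix_apply, Equiv.swap_apply_left, diag_apply]

end IsUnitarilyInvariant

end Conjugation

theorem isUnitarilyInvariant_of_forall_diagonal {φ : Matrix n n ℂ → Matrix n n ℂ}
    (F : (n → ℂ) → Matrix n n ℂ)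
    (hF : ∀ (U : unitaryGroup n ℂ) (d : n → ℂ),
      φ ((U : Matrix n n ℂ) * diagonal d * (U : Matrix n n ℂ)ᴴ)
        = (U : Matrix n n ℂ) * F d * (U : Matrix n n ℂ)ᴴ) :
    IsUnitarilyInvariant φ := by
  intro U Z hZ
  obtain ⟨V, d, rfl⟩ := exists_unitary_conj_diagonal_of_normal hZ
  have hUV (M : Matrix n n ℂ) :
      (U : Matrix n n ℂ) * (V * M * (V : Matrix n n ℂ)ᴴ) * (U : Matrix n n ℂ)ᴴ
        = ((U * V : unitaryGroup n ℂ) : Matrix n n ℂ) * M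
            * ((U * V : unitaryGroup n ℂ) : Matrix n n ℂ)ᴴ := by
    simp only [Submonoid.coe_mul, conjTranspose_mul, mul_assoc]
  rw [hUV, hF, hF, hUV]

end Matrix

/-- A `ℂ^{N×N}`-valued function `φ` on the normal `N×N` matrices is `U`-invariant
(`φ(UZU*) = Uφ(Z)U*` for all unitary `U` and normal `Z`) if and only if there is a
unique function `f(d_1; d_2, …, d_N)` on `ℂ × ℂ^{N-1}`, symmetric in its last
`N−1` variables, with
`φ(UDU*) = U diag_j(f(d_j; d_1,…,d̂_j,…,d_N)) U*` for all unitary `U` and diagonal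
`D = diag(d)`.  Here `f` is encoded as a function on `Fin N → ℂ` (the first slot
being the distinguished variable), symmetry in the last `N−1` variables being
invariance under all permutations fixing `0`, and the argument list
`(d_j; d_1,…,d̂_j,…,d_N)` is `d ∘ (swap 0 j)`. -/
theorem stmt_13 (N : ℕ) [NeZero N]
    (φ : Matrix (Fin N) (Fin N) ℂ → Matrix (Fin N) (Fin N) ℂ) :
    (∀ (U : Matrix.unitaryGroup (Fin N) ℂ) (Z : Matrix (Fin N) (Fin N) ℂ),
        Zᴴ * Z = Z * Zᴴ →
        φ ((U : Matrix (Fin N) (Fin N) ℂ) * Z * (U : Matrix (Fin N) (Fin N) ℂ)ᴴ)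
          = (U : Matrix (Fin N) (Fin N) ℂ) * φ Z * (U : Matrix (Fin N) (Fin N) ℂ)ᴴ)
    ↔ (∃! f : (Fin N → ℂ) → ℂ,
        (∀ σ : Equiv.Perm (Fin N), σ 0 = 0 → ∀ d : Fin N → ℂ, f (d ∘ σ) = f d) ∧
        ∀ (U : Matrix.unitaryGroup (Fin N) ℂ) (d : Fin N → ℂ),
          φ ((U : Matrix (Fin N) (Fin N) ℂ) * Matrix.diagonal d *
              (U : Matrix (Fin N) (Fin N) ℂ)ᴴ)
            = (U : Matrix (Fin N) (Fin N) ℂ) *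
                Matrix.diagonal (fun j => f (d ∘ Equiv.swap (0 : Fin N) j)) *
                (U : Matrix (Fin N) (Fin N) ℂ)ᴴ) := by
  constructor
  · intro (h : IsUnitarilyInvariant φ)
    refine ⟨fun d => φ (diagonal d) 0 0, ⟨fun σ hσ d => ?_, fun U d => ?_⟩, fun g ⟨_, hg⟩ => ?_⟩
    · beta_reduce
      rw [h.apply_diagonal_comp_perm, submatrix_apply, hσ]
    · rw [h U _ (commute_conjTranspose_diagonal d), h.apply_diagonal 0]
    · funext d
      simpa using (congrFun₂ (hg 1 d) 0 0).symm
  · rintro ⟨f, ⟨-, hf⟩, -⟩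
    exact isUnitarilyInvariant_of_forall_diagonal _ hf
end

section
/- Let μ_h denote the measure on the normal N×N matrices defined by ∫ f dμ_h = (πh)^{-N} ∫_{U(N)} ∫_{ℂ^N} f(U*DU) e^{-‖D‖²/h} dU dD. Then ∫ Z^{*j} Z^k dμ_h(Z) = δ_{jk} k! h^k I. -/
/-
For fixed `U`, the entry `(Z^{*j} Z^k)_{ab}` of `Z = U^* D U` is
`∑ᵢ conj(U_{ia}) U_{ib} conj(dᵢ)^j dᵢ^k`, so the `d`-integral factors over the coordinates into
one-dimensional complex Gaussian moments. Such a moment vanishes for `j ≠ k` because the rotation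
`z ↦ w z` with `conj(w)^j w^k = -1` preserves Lebesgue measure and the Gaussian but negates
`conj(z)^j z^k`; for `j = k` it is the radial integral `∫ |z|^{2k} e^{-|z|²/h} = π h^{k+1} k!`.
The remaining sum `∑ᵢ conj(U_{ia}) U_{ib}` is `(U^* U)_{ab} = δ_{ab}`, and the Haar integral of
the resulting constant is that constant.
-/

open MeasureTheory Matrix

theorem conj_pow_mul_pow_exp_mul_I (θ : ℝ) (j k : ℕ) :
    (starRingEnd ℂ) (Complex.exp (θ * Complex.I)) ^ j * Complex.exp (θ * Complex.I) ^ k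
      = Complex.exp ((((k : ℝ) - j) * θ : ℝ) * Complex.I) := by
  rw [← Complex.exp_conj, map_mul, Complex.conj_ofReal, Complex.conj_I, ← Complex.exp_nat_mul,
    ← Complex.exp_nat_mul, ← Complex.exp_add]
  push_cast
  ring_nf

theorem integral_conj_pow_mul_pow_mul_radial_eq_zero {j k : ℕ} (hjk : j ≠ k) (g : ℝ → ℂ) :
    ∫ z : ℂ, (starRingEnd ℂ z) ^ j * z ^ k * g (Complex.normSq z) = 0 := by
  set F : ℂ → ℂ := fun z => (starRingEnd ℂ z) ^ j * z ^ k * g (Complex.normSq z)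
  have hkj : (k : ℝ) - j ≠ 0 := sub_ne_zero.mpr (by exact_mod_cast hjk.symm)
  set w : Circle := Circle.exp (Real.pi / ((k : ℝ) - j))
  have hw : (starRingEnd ℂ w) ^ j * (w : ℂ) ^ k = -1 := by
    rw [Circle.coe_exp, conj_pow_mul_pow_exp_mul_I, mul_div_cancel₀ _ hkj, Complex.exp_pi_mul_I]
  have hF : ∀ z, F (rotation w z) = -F z := fun z => by
    simp only [F, rotation_apply, map_mul, mul_pow, Circle.normSq_coe, one_mul]
    linear_combination (starRingEnd ℂ z ^ j * z ^ k * g (Complex.normSq z)) * hw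
  have hinv := (rotation w).measurePreserving.integral_comp'
    (f := (rotation w).toMeasurableEquiv) F
  simp only [LinearIsometryEquiv.coe_toMeasurableEquiv, hF, integral_neg] at hinv
  exact self_eq_neg.mp hinv.symm

theorem integral_norm_rpow_mul_exp_neg_sq_div {h : ℝ} (hh : 0 < h) {q : ℝ} (hq : -2 < q) :
    ∫ z : ℂ, ‖z‖ ^ q * Real.exp (-‖z‖ ^ 2 / h)
      = Real.pi * h ^ (q / 2 + 1) * Real.Gamma (q / 2 + 1) := by
  have := Complex.integral_rpow_mul_exp_neg_mul_rpow (p := 2) (b := h⁻¹) one_le_two hq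
    (by positivity)
  simp only [Real.rpow_two, neg_mul, ← div_eq_inv_mul, ← neg_div] at this
  rw [this, Real.inv_rpow hh.le, ← Real.rpow_neg hh.le]
  ring_nf

theorem integrable_norm_pow_mul_exp_neg_sq_div {h : ℝ} (hh : 0 < h) (m : ℕ) :
    Integrable fun z : ℂ => ‖z‖ ^ m * Real.exp (-‖z‖ ^ 2 / h) := by
  -- a non-integrable function would have integral `0`
  refine Integrable.of_integral_ne_zero ?_
  have := integral_norm_rpow_mul_exp_neg_sq_div hh (q := m) (by linarith [m.cast_nonneg (α := ℝ)])
  simp only [Real.rpow_natCast] at this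
  rw [this]
  have : 0 < Real.Gamma (m / 2 + 1) := Real.Gamma_pos_of_pos (by positivity)
  positivity

theorem integral_norm_pow_two_mul_mul_exp_neg_sq_div {h : ℝ} (hh : 0 < h) (m : ℕ) :
    ∫ z : ℂ, ‖z‖ ^ (2 * m) * Real.exp (-‖z‖ ^ 2 / h) = Real.pi * h ^ (m + 1) * m.factorial := by
  have := integral_norm_rpow_mul_exp_neg_sq_div hh (q := (2 * m : ℕ))
    (by linarith [m.cast_nonneg (α := ℝ)])
  rw [show ((2 * m : ℕ) : ℝ) / 2 + 1 = (m + 1 : ℕ) by push_cast; ring] at this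
  simp only [Real.rpow_natCast] at this
  rwa [Nat.cast_succ, Real.Gamma_nat_eq_factorial] at this

theorem integrable_conj_pow_mul_pow_mul_gaussian {h : ℝ} (hh : 0 < h) (j k : ℕ) :
    Integrable fun z : ℂ =>
      (starRingEnd ℂ z) ^ j * z ^ k * (Real.exp (-Complex.normSq z / h) : ℂ) := by
  refine (integrable_norm_pow_mul_exp_neg_sq_div hh (j + k)).mono' (by fun_prop)
    (.of_forall fun z => le_of_eq ?_)
  rw [norm_mul, norm_mul, norm_pow, norm_pow, RCLike.norm_conj, Complex.norm_real,
    Real.norm_of_nonneg (Real.exp_nonneg _), Complex.normSq_eq_norm_sq, pow_add]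

theorem integral_conj_pow_mul_pow_mul_gaussian {h : ℝ} (hh : 0 < h) (j k : ℕ) :
    ∫ z : ℂ, (starRingEnd ℂ z) ^ j * z ^ k * (Real.exp (-Complex.normSq z / h) : ℂ)
      = Real.pi * h * (if j = k then (k.factorial * h ^ k : ℂ) else 0) := by
  split_ifs with hjk
  · subst hjk
    have hpow : ∀ z : ℂ, (starRingEnd ℂ z) ^ j * z ^ j = ((‖z‖ ^ (2 * j) : ℝ) : ℂ) := fun z => by
      rw [← mul_pow, mul_comm, Complex.mul_conj, Complex.normSq_eq_norm_sq, pow_mul]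
      norm_cast
    simp_rw [hpow, ← Complex.ofReal_mul]
    rw [integral_complex_ofReal]
    simp_rw [Complex.normSq_eq_norm_sq]
    rw [integral_norm_pow_two_mul_mul_exp_neg_sq_div hh]
    push_cast; ring
  · rw [mul_zero]
    exact integral_conj_pow_mul_pow_mul_radial_eq_zero hjk fun r => (Real.exp (-r / h) : ℂ)

theorem integrable_prod_conj_pow_mul_pow_mul_gaussian {ι : Type*} [Fintype ι] {h : ℝ} (hh : 0 < h)
    (J K : ι → ℕ) :
    Integrable fun d : ι → ℂ => ∏ l, (starRingEnd ℂ (d l)) ^ J l * d l ^ K l *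
      (Real.exp (-Complex.normSq (d l) / h) : ℂ) :=
  Integrable.fintype_prod fun l => integrable_conj_pow_mul_pow_mul_gaussian hh (J l) (K l)

theorem integral_prod_conj_pow_mul_pow_mul_gaussian {ι : Type*} [Fintype ι] {h : ℝ} (hh : 0 < h)
    (J K : ι → ℕ) :
    ∫ d : ι → ℂ, ∏ l, (starRingEnd ℂ (d l)) ^ J l * d l ^ K l *
      (Real.exp (-Complex.normSq (d l) / h) : ℂ)
      = ∏ l, Real.pi * h * (if J l = K l then ((K l).factorial * h ^ K l : ℂ) else 0) := by
  rw [integral_fintype_prod_volume_eq_prod (fun l (z : ℂ) => (starRingEnd ℂ z) ^ J l * z ^ K l *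
    (Real.exp (-Complex.normSq z / h) : ℂ))]
  simp_rw [integral_conj_pow_mul_pow_mul_gaussian hh]

theorem conj_pow_mul_pow_mul_gaussian_eq_prod {ι : Type*} [Fintype ι] [DecidableEq ι] (h : ℝ)
    (d : ι → ℂ) (i : ι) (j k : ℕ) :
    (starRingEnd ℂ (d i)) ^ j * d i ^ k * (Real.exp (-(∑ l, Complex.normSq (d l)) / h) : ℂ)
      = ∏ l, (starRingEnd ℂ (d l)) ^ Pi.single i j l * d l ^ Pi.single i k l *
          (Real.exp (-Complex.normSq (d l) / h) : ℂ) := by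
  rw [Finset.prod_mul_distrib, Finset.prod_mul_distrib, ← Complex.ofReal_prod, ← Real.exp_sum,
    ← Finset.sum_div, Finset.sum_neg_distrib]
  congr 2 <;>
    rw [Finset.prod_eq_single i (fun l _ hl => by simp [hl]) (by simp),
      Pi.single_eq_same]

theorem integrable_conj_pow_mul_pow_mul_gaussian_pi {ι : Type*} [Fintype ι] {h : ℝ} (hh : 0 < h)
    (i : ι) (j k : ℕ) :
    Integrable fun d : ι → ℂ =>
      (starRingEnd ℂ (d i)) ^ j * d i ^ k * (Real.exp (-(∑ l, Complex.normSq (d l)) / h) : ℂ) := by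
  classical
  simp_rw [conj_pow_mul_pow_mul_gaussian_eq_prod]
  exact integrable_prod_conj_pow_mul_pow_mul_gaussian hh _ _

theorem integral_conj_pow_mul_pow_mul_gaussian_pi {ι : Type*} [Fintype ι] {h : ℝ} (hh : 0 < h)
    (i : ι) (j k : ℕ) :
    ∫ d : ι → ℂ,
      (starRingEnd ℂ (d i)) ^ j * d i ^ k * (Real.exp (-(∑ l, Complex.normSq (d l)) / h) : ℂ)
      = ((Real.pi : ℂ) * h) ^ Fintype.card ι *
          (if j = k then (k.factorial * h ^ k : ℂ) else 0) := by
  classical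
  simp_rw [conj_pow_mul_pow_mul_gaussian_eq_prod, integral_prod_conj_pow_mul_pow_mul_gaussian hh,
    Finset.prod_mul_distrib, Finset.prod_const, Finset.card_univ]
  rw [Finset.prod_eq_single i (fun l _ hl => by simp [hl]) (by simp)]
  simp [mul_pow]

theorem mul_diagonal_mul_apply {l m n α : Type*} [Fintype n] [DecidableEq n]
    [NonUnitalNonAssocSemiring α]
    (A : Matrix l n α) (e : n → α) (B : Matrix n m α) (a : l) (b : m) :
    (A * diagonal e * B) a b = ∑ i, A a i * e i * B i b := by
  rw [mul_apply]
  simp_rw [mul_diagonal]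

theorem star_conj_pow_mul_conj_pow {R : Type*} [Ring R] [StarRing R] (u : unitary R) (x : R)
    (j k : ℕ) :
    star ((star u : R) * x * u) ^ j * ((star u : R) * x * u) ^ k
      = (star u : R) * (star x ^ j * x ^ k) * u := by
  simp only [← Unitary.conjStarAlgAut_star_apply (S := ℕ) u, map_mul, map_pow, map_star]

theorem conjTranspose_pow_mul_pow_conj_diagonal_apply {n α : Type*} [Fintype n] [DecidableEq n]
    [CommRing α] [StarRing α] (U : unitaryGroup n α) (d : n → α) (j k : ℕ) (a b : n) :
    (((U : Matrix n n α)ᴴ * diagonal d * (U : Matrix n n α))ᴴ ^ j *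
      ((U : Matrix n n α)ᴴ * diagonal d * (U : Matrix n n α)) ^ k) a b
      = ∑ i, star ((U : Matrix n n α) i a) * (star (d i) ^ j * d i ^ k) *
          (U : Matrix n n α) i b := by
  have hconj := star_conj_pow_mul_conj_pow U (diagonal d) j k
  simp only [star_eq_conjTranspose, diagonal_conjTranspose, diagonal_pow,
    diagonal_mul_diagonal] at hconj
  rw [hconj, mul_diagonal_mul_apply]
  rfl

theorem integral_conjTranspose_pow_mul_pow_conj_diagonal_mul_gaussian_apply {n : Type*}
    [Fintype n] [DecidableEq n] {h : ℝ} (hh : 0 < h) (U : unitaryGroup n ℂ) (j k : ℕ) (a b : n) :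
    ∫ d : n → ℂ,
      (((U : Matrix n n ℂ)ᴴ * diagonal d * (U : Matrix n n ℂ))ᴴ ^ j *
        ((U : Matrix n n ℂ)ᴴ * diagonal d * (U : Matrix n n ℂ)) ^ k) a b *
        (Real.exp (-(∑ i, Complex.normSq (d i)) / h) : ℂ)
      = ((Real.pi : ℂ) * h) ^ Fintype.card n * (if j = k then (k.factorial * h ^ k : ℂ) else 0) *
          (1 : Matrix n n ℂ) a b := by
  have hcolumns : ∑ i, star ((U : Matrix n n ℂ) i a) * (U : Matrix n n ℂ) i b
      = (1 : Matrix n n ℂ) a b := by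
    rw [← Unitary.coe_star_mul_self U, star_eq_conjTranspose, mul_apply]
    rfl
  calc _ = ∫ d : n → ℂ, ∑ i, star ((U : Matrix n n ℂ) i a) * (U : Matrix n n ℂ) i b *
        ((starRingEnd ℂ (d i)) ^ j * d i ^ k *
          (Real.exp (-(∑ l, Complex.normSq (d l)) / h) : ℂ)) := by
        congr 1
        funext d
        rw [conjTranspose_pow_mul_pow_conj_diagonal_apply, Finset.sum_mul]
        simp only [RCLike.star_def]
        congr 1
        funext i
        ring
    _ = _ := by
        rw [integral_finsetSum _
          fun i _ => (integrable_conj_pow_mul_pow_mul_gaussian_pi hh i j k).const_mul _]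
        simp_rw [integral_const_mul, integral_conj_pow_mul_pow_mul_gaussian_pi hh, ← Finset.sum_mul,
          hcolumns]
        ring

theorem stmt_15_general (N : ℕ)
    [MeasurableSpace (Matrix.unitaryGroup (Fin N) ℂ)]
    (μ : Measure (Matrix.unitaryGroup (Fin N) ℂ))
    [IsProbabilityMeasure μ]
    (h : ℝ) (hh : 0 < h) (j k : ℕ) :
    ∀ a b : Fin N,
      (((Real.pi * h) ^ N : ℂ))⁻¹ *
        (∫ U : Matrix.unitaryGroup (Fin N) ℂ,
          ∫ d : Fin N → ℂ,
            ((((U : Matrix (Fin N) (Fin N) ℂ)ᴴ * Matrix.diagonal d *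
                (U : Matrix (Fin N) (Fin N) ℂ))ᴴ ^ j *
              ((U : Matrix (Fin N) (Fin N) ℂ)ᴴ * Matrix.diagonal d *
                (U : Matrix (Fin N) (Fin N) ℂ)) ^ k) a b) *
              Complex.ofReal (Real.exp (-(∑ i, Complex.normSq (d i)) / h))
            ∂volume ∂μ)
        = if j = k then (k.factorial : ℂ) * (h : ℂ) ^ k *
            (1 : Matrix (Fin N) (Fin N) ℂ) a b else 0 := by
  intro a b
  have hπh : ((Real.pi : ℂ) * h) ^ N ≠ 0 :=
    pow_ne_zero _ (by exact_mod_cast (mul_pos Real.pi_pos hh).ne')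
  simp_rw [integral_conjTranspose_pow_mul_pow_conj_diagonal_mul_gaussian_apply hh, integral_const,
    probReal_univ, one_smul, Fintype.card_fin]
  field_simp
  split_ifs <;> ring

/-- For the measure `μ_h` on the normal `N×N` matrices defined by
`∫ f dμ_h = (πh)^{-N} ∫_{U(N)} ∫_{ℂ^N} f(U*DU) e^{-‖D‖²/h} dD dU`
(`dU` normalized Haar measure on `U(N)`, `dD` Lebesgue measure on `ℂ^N`), one has
`∫ Z^{*j} Z^k dμ_h(Z) = δ_{jk} k! h^k I` (entrywise). -/
theorem stmt_15 (N : ℕ) (hN : 0 < N)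
    [MeasurableSpace (Matrix.unitaryGroup (Fin N) ℂ)]
    [BorelSpace (Matrix.unitaryGroup (Fin N) ℂ)]
    (μ : Measure (Matrix.unitaryGroup (Fin N) ℂ))
    [IsProbabilityMeasure μ]
    (hleft : ∀ V : Matrix.unitaryGroup (Fin N) ℂ,
      MeasurePreserving (fun U => V * U) μ μ)
    (hright : ∀ V : Matrix.unitaryGroup (Fin N) ℂ,
      MeasurePreserving (fun U => U * V) μ μ)
    (h : ℝ) (hh : 0 < h) (j k : ℕ) :
    ∀ a b : Fin N,
      (((Real.pi * h) ^ N : ℂ))⁻¹ *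
        (∫ U : Matrix.unitaryGroup (Fin N) ℂ,
          ∫ d : Fin N → ℂ,
            ((((U : Matrix (Fin N) (Fin N) ℂ)ᴴ * Matrix.diagonal d *
                (U : Matrix (Fin N) (Fin N) ℂ))ᴴ ^ j *
              ((U : Matrix (Fin N) (Fin N) ℂ)ᴴ * Matrix.diagonal d *
                (U : Matrix (Fin N) (Fin N) ℂ)) ^ k) a b) *
              Complex.ofReal (Real.exp (-(∑ i, Complex.normSq (d i)) / h))
            ∂volume ∂μ)
        = if j = k then (k.factorial : ℂ) * (h : ℂ) ^ k *
            (1 : Matrix (Fin N) (Fin N) ℂ) a b else 0 :=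
  stmt_15_general N μ h hh j k
end

section
/- Under the unitary isomorphism ι: Z^k χ_j ↦ z^k ⊗ χ_j from the reproducing kernel space H_h over the normal matrices onto L²_hol(ℂ, dμ_h) ⊗ ℂ^N, the Toeplitz operator T^{(h)}_{g^#} with spectral symbol g^# corresponds to T^{(h)}_g ⊗ I, where T^{(h)}_g is the scalar Toeplitz operator with symbol g on the Segal-Bargmann space L²_hol(ℂ, dμ_h). -/
/-!
Write `Z = U D U*` with `D = diag(d)`. Conjugation by `U` is a star-algebra automorphism, so
`Z*^l g^#(Z) Z^k = U diag(F(d_i)) U*` with `F(z) = z̄^l g(z) z^k`, and the matrix element is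
`∑_i a_i(U) F(d_i)` with `a_i(U) = (η* U)_i (U* χ)_i`. The Gaussian weight is a product over the
eigenvalues, so integrating in `d` turns `F(d_i)` into its `μ_h`-mean for every `i`, and
`∑_i a_i(U) = η* U U* χ = ⟨χ, η⟩`. The `d`-integral is therefore independent of `U`.
-/

open MeasureTheory Matrix Finset

section PiIntegral

variable {𝕜 ι E : Type*} [RCLike 𝕜] [Fintype ι] [MeasurableSpace E] {μ : Measure E}
  [SigmaFinite μ]

theorem integral_pi_sum_mul_prod {f w : E → 𝕜} (hfw : Integrable (fun x ↦ f x * w x) μ)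
    (hw : Integrable w μ) (hw₀ : ∫ x, w x ∂μ ≠ 0) (a : ι → 𝕜) :
    ∫ d : ι → E, (∑ i, a i * f (d i)) * ∏ j, w (d j) ∂(Measure.pi fun _ ↦ μ)
      = (∑ i, a i) * ((∫ x, f x * w x ∂μ) / ∫ x, w x ∂μ) * (∫ x, w x ∂μ) ^ Fintype.card ι := by
  classical
  set φ : ι → ι → E → 𝕜 := fun i ↦ Function.update (fun _ ↦ w) i (fun x ↦ f x * w x)
  have hprod : ∀ i (d : ι → E), f (d i) * ∏ j, w (d j) = ∏ j, φ i j (d j) := by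
    intro i d
    rw [← mul_prod_erase univ _ (mem_univ i), ← mul_prod_erase univ _ (mem_univ i), ← mul_assoc]
    simp only [φ, Function.update_self]
    congr 1
    exact prod_congr rfl fun j hj ↦ by rw [Function.update_of_ne (ne_of_mem_erase hj)]
  have hint : ∀ i, Integrable (fun d : ι → E ↦ ∏ j, φ i j (d j)) (Measure.pi fun _ ↦ μ) :=
    fun i ↦ Integrable.fintype_prod fun j ↦ by
      rcases eq_or_ne j i with rfl | hj
      · simpa [φ] using hfw
      · simpa [φ, hj] using hw
  have hcoord : ∀ i, ∫ d : ι → E, ∏ j, φ i j (d j) ∂(Measure.pi fun _ ↦ μ)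
      = (∫ x, f x * w x ∂μ) / (∫ x, w x ∂μ) * (∫ x, w x ∂μ) ^ Fintype.card ι := by
    intro i
    have hupd : ∀ j, ∫ x, φ i j x ∂μ
        = Function.update (fun _ ↦ ∫ x, w x ∂μ) i (∫ x, f x * w x ∂μ) j := fun j ↦
      Function.apply_update (fun _ (g : E → 𝕜) ↦ ∫ x, g x ∂μ) _ i _ j
    rw [integral_fintype_prod_eq_prod, Fintype.prod_congr _ _ hupd,
      prod_update_of_mem (mem_univ i), prod_const, card_sdiff_of_subset (by simp),
      card_singleton, card_univ, ← mul_pow_sub_one (Fintype.card_pos_iff.2 ⟨i⟩).ne',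
      ← mul_assoc, div_mul_cancel₀ _ hw₀]
  simp_rw [sum_mul, mul_assoc, hprod]
  rw [integral_finsetSum _ fun i _ ↦ (hint i).const_mul (a i)]
  simp_rw [integral_const_mul, hcoord]

end PiIntegral

section GaussianMoments

variable {E : Type*} [NormedAddCommGroup E] [NormedSpace ℝ E] [Nontrivial E]
  [FiniteDimensional ℝ E] [MeasurableSpace E] [BorelSpace E] (μ : Measure E)
  [μ.IsAddHaarMeasure]

theorem integrable_pow_norm_mul_exp_neg_mul_sq_norm {b : ℝ} (hb : 0 < b) (m : ℕ) :
    Integrable (fun x : E ↦ ‖x‖ ^ m * Real.exp (-b * ‖x‖ ^ 2)) μ := by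
  rw [integrable_fun_norm_addHaar μ (f := fun y ↦ y ^ m * Real.exp (-b * y ^ 2))]
  have hs : (-1 : ℝ) < (Module.finrank ℝ E - 1 + m : ℕ) :=
    neg_one_lt_zero.trans_le (Nat.cast_nonneg _)
  refine (integrableOn_rpow_mul_exp_neg_mul_sq hb hs).congr_fun (fun y _ ↦ ?_) measurableSet_Ioi
  simp only [Real.rpow_natCast, smul_eq_mul, pow_add, mul_assoc]

end GaussianMoments

section UnitaryConjugation

variable {n R : Type*} [Fintype n] [DecidableEq n] [CommRing R] [StarRing R]

theorem unitary_conj_diagonal_conjTranspose_pow_mul_mul_pow (U : unitaryGroup n R)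
    (d e : n → R) (k l : ℕ) :
    ((U : Matrix n n R) * diagonal d * (U : Matrix n n R)ᴴ)ᴴ ^ l *
        ((U : Matrix n n R) * diagonal e * (U : Matrix n n R)ᴴ) *
        ((U : Matrix n n R) * diagonal d * (U : Matrix n n R)ᴴ) ^ k
      = (U : Matrix n n R) * diagonal (fun i ↦ star (d i) ^ l * e i * d i ^ k) *
          (U : Matrix n n R)ᴴ := by
  have hconj : ∀ X : Matrix n n R, (U : Matrix n n R) * X * star (U : Matrix n n R)
      = Unitary.conjStarAlgAut R _ U X := fun X ↦ rfl
  simp only [← star_eq_conjTranspose, hconj]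
  rw [← map_star, ← map_pow, ← map_pow, ← map_mul, ← map_mul, star_eq_conjTranspose,
    diagonal_conjTranspose, diagonal_pow, diagonal_pow, diagonal_mul_diagonal,
    diagonal_mul_diagonal]
  rfl

theorem dotProduct_conj_diagonal_mulVec (A : Matrix n n R) (e χ η : n → R) :
    star η ⬝ᵥ (A * diagonal e * Aᴴ) *ᵥ χ = ∑ i, (star η ᵥ* A) i * (Aᴴ *ᵥ χ) i * e i := by
  rw [← mulVec_mulVec, ← mulVec_mulVec, dotProduct_mulVec, dotProduct]
  simp only [mulVec_diagonal]
  exact sum_congr rfl fun i _ ↦ by ring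

theorem sum_vecMul_mul_conjTranspose_mulVec (U : unitaryGroup n R) (χ η : n → R) :
    ∑ i, (star η ᵥ* (U : Matrix n n R)) i * ((U : Matrix n n R)ᴴ *ᵥ χ) i = star η ⬝ᵥ χ := by
  rw [← dotProduct, ← dotProduct_mulVec, mulVec_mulVec, ← star_eq_conjTranspose,
    Unitary.mul_star_self_of_mem U.2, one_mulVec]

end UnitaryConjugation

section SegalBargmann

noncomputable def gaussianWeight (h : ℝ) (z : ℂ) : ℂ := Real.exp (-Complex.normSq z / h)

theorem gaussianWeight_eq (h : ℝ) (z : ℂ) :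
    gaussianWeight h z = ((Real.exp (-h⁻¹ * ‖z‖ ^ 2) : ℝ) : ℂ) := by
  rw [gaussianWeight, Complex.sq_norm, neg_div, div_eq_inv_mul, neg_mul]

theorem integrable_gaussianWeight {h : ℝ} (hh : 0 < h) : Integrable (gaussianWeight h) := by
  simp_rw [funext (gaussianWeight_eq h)]
  simpa using
    (integrable_pow_norm_mul_exp_neg_mul_sq_norm volume (inv_pos.2 hh) 0).ofReal (𝕜 := ℂ)

theorem integral_gaussianWeight {h : ℝ} (hh : 0 < h) :
    ∫ z, gaussianWeight h z = Real.pi * h := by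
  simp_rw [gaussianWeight_eq]
  rw [integral_complex_ofReal, GaussianFourier.integral_rexp_neg_mul_sq_norm (inv_pos.2 hh), Complex.finrank_real_complex]
  norm_num [div_inv_eq_mul]

theorem integrable_conj_pow_mul_mul_pow_mul_gaussianWeight {h : ℝ} (hh : 0 < h) {g : ℂ → ℂ}
    (hg : Measurable g) {C : ℝ} (hgb : ∀ z, ‖g z‖ ≤ C) (k l : ℕ) :
    Integrable (fun z ↦ (starRingEnd ℂ z) ^ l * g z * z ^ k * gaussianWeight h z) := by
  refine ((integrable_pow_norm_mul_exp_neg_mul_sq_norm volume (inv_pos.2 hh) (l + k)).const_mul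
    C).mono' ?_ (ae_of_all _ fun z ↦ ?_)
  · exact Measurable.aestronglyMeasurable (by unfold gaussianWeight; fun_prop)
  · calc ‖(starRingEnd ℂ z) ^ l * g z * z ^ k * gaussianWeight h z‖
        = ‖g z‖ * (‖z‖ ^ (l + k) * Real.exp (-h⁻¹ * ‖z‖ ^ 2)) := by
          rw [gaussianWeight_eq, norm_mul, norm_mul, norm_mul, norm_pow, norm_pow,
            Complex.norm_conj, Complex.norm_real, Real.norm_of_nonneg (Real.exp_pos _).le]
          ring
      _ ≤ C * (‖z‖ ^ (l + k) * Real.exp (-h⁻¹ * ‖z‖ ^ 2)) :=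
          mul_le_mul_of_nonneg_right (hgb z) (by positivity)

theorem prod_gaussianWeight {ι : Type*} [Fintype ι] (h : ℝ) (d : ι → ℂ) :
    ∏ i, gaussianWeight h (d i) = Real.exp (-(∑ i, Complex.normSq (d i)) / h) := by
  simp only [gaussianWeight, ← Complex.ofReal_prod, ← Real.exp_sum, ← sum_div, ← sum_neg_distrib]

end SegalBargmann

/-- The operator identity is stated on matrix elements
`⟨T_{g^#} Z^k χ, Z^l η⟩ = ⟨χ, η⟩ ⟨T_g z^k, z^l⟩`, with `μ_h` on normal matrices written in the
coordinates `Z = U D U*`. -/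
theorem stmt_16_general (N : ℕ)
    [MeasurableSpace (Matrix.unitaryGroup (Fin N) ℂ)]
    (μ : Measure (Matrix.unitaryGroup (Fin N) ℂ))
    [IsProbabilityMeasure μ]
    (h : ℝ) (hh : 0 < h)
    (g : ℂ → ℂ) (hg : Measurable g) (C : ℝ) (hgb : ∀ z : ℂ, ‖g z‖ ≤ C)
    (k l : ℕ) (χ η : Fin N → ℂ) :
    (((Real.pi * h) ^ N : ℂ))⁻¹ *
      (∫ U : Matrix.unitaryGroup (Fin N) ℂ,
        ∫ d : Fin N → ℂ,
          (∑ a, (starRingEnd ℂ) (η a) *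
            ((((U : Matrix (Fin N) (Fin N) ℂ) * Matrix.diagonal d *
                  (U : Matrix (Fin N) (Fin N) ℂ)ᴴ)ᴴ ^ l *
                ((U : Matrix (Fin N) (Fin N) ℂ) *
                  Matrix.diagonal (fun i => g (d i)) *
                  (U : Matrix (Fin N) (Fin N) ℂ)ᴴ) *
                ((U : Matrix (Fin N) (Fin N) ℂ) * Matrix.diagonal d *
                  (U : Matrix (Fin N) (Fin N) ℂ)ᴴ) ^ k).mulVec χ a)) *
            Complex.ofReal (Real.exp (-(∑ i, Complex.normSq (d i)) / h))
          ∂volume ∂μ)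
      = (∑ i, (starRingEnd ℂ) (η i) * χ i) *
          (((Real.pi * h : ℂ))⁻¹ *
            ∫ z : ℂ, ((starRingEnd ℂ) z) ^ l * g z * z ^ k *
              Complex.ofReal (Real.exp (-(Complex.normSq z) / h)) ∂volume) := by
  set F : ℂ → ℂ := fun z ↦ (starRingEnd ℂ z) ^ l * g z * z ^ k
  have hπh : (Real.pi * h : ℂ) ≠ 0 := by norm_cast; positivity
  rw [integral_congr_ae (g := fun _ ↦ star η ⬝ᵥ χ *
      ((∫ z, F z * gaussianWeight h z) / (Real.pi * h)) * (Real.pi * h) ^ N)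
      (ae_of_all _ fun U ↦ ?_), integral_const, probReal_univ, one_smul,
    inv_mul_eq_iff_eq_mul₀ (pow_ne_zero _ hπh)]
  · rw [mul_comm, div_eq_inv_mul]
    rfl
  · simp_rw [unitary_conj_diagonal_conjTranspose_pow_mul_mul_pow, ← prod_gaussianWeight]
    change ∫ d, (star η ⬝ᵥ _) * _ = _
    simp_rw [dotProduct_conj_diagonal_mulVec]
    refine (integral_pi_sum_mul_prod (f := F)
      (integrable_conj_pow_mul_mul_pow_mul_gaussianWeight hh hg hgb k l)
      (integrable_gaussianWeight hh) (by rwa [integral_gaussianWeight hh]) _).trans ?_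
    rw [sum_vecMul_mul_conjTranspose_mulVec, integral_gaussianWeight hh, Fintype.card_fin]

/-- Under the unitary isomorphism `ι : Z^k χ_j ↦ z^k ⊗ χ_j` of `H_h` (over the
normal matrices) onto `L²_hol(ℂ, dμ_h) ⊗ ℂ^N`, the Toeplitz operator with
spectral symbol `g^#` corresponds to `T_g ⊗ I`.  Concretely, all matrix
elements agree:
`⟨T_{g^#} Z^k χ, Z^l η⟩_{H_h} = ⟨χ, η⟩ ⟨T_g z^k, z^l⟩_{L²_hol(ℂ,dμ_h)}`,
i.e. `∫ η* Z^{*l} g^#(Z) Z^k χ dμ_h(Z) = (∑_i η̄_i χ_i)·∫ z̄^l g(z) z^k dμ_h(z)`,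
with the measure `μ_h` on normal matrices written via the parametrization
`Z = U D U*` and `g^#(UDU*) = U diag_i(g(d_i)) U*`. -/
theorem stmt_16 (N : ℕ) (hN : 0 < N)
    [MeasurableSpace (Matrix.unitaryGroup (Fin N) ℂ)]
    [BorelSpace (Matrix.unitaryGroup (Fin N) ℂ)]
    (μ : Measure (Matrix.unitaryGroup (Fin N) ℂ))
    [IsProbabilityMeasure μ]
    (hleft : ∀ V : Matrix.unitaryGroup (Fin N) ℂ,
      MeasurePreserving (fun U => V * U) μ μ)
    (hright : ∀ V : Matrix.unitaryGroup (Fin N) ℂ,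
      MeasurePreserving (fun U => U * V) μ μ)
    (h : ℝ) (hh : 0 < h)
    (g : ℂ → ℂ) (hg : Measurable g) (C : ℝ) (hgb : ∀ z : ℂ, ‖g z‖ ≤ C)
    (k l : ℕ) (χ η : Fin N → ℂ) :
    (((Real.pi * h) ^ N : ℂ))⁻¹ *
      (∫ U : Matrix.unitaryGroup (Fin N) ℂ,
        ∫ d : Fin N → ℂ,
          (∑ a, (starRingEnd ℂ) (η a) *
            ((((U : Matrix (Fin N) (Fin N) ℂ) * Matrix.diagonal d *
                  (U : Matrix (Fin N) (Fin N) ℂ)ᴴ)ᴴ ^ l *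
                ((U : Matrix (Fin N) (Fin N) ℂ) *
                  Matrix.diagonal (fun i => g (d i)) *
                  (U : Matrix (Fin N) (Fin N) ℂ)ᴴ) *
                ((U : Matrix (Fin N) (Fin N) ℂ) * Matrix.diagonal d *
                  (U : Matrix (Fin N) (Fin N) ℂ)ᴴ) ^ k).mulVec χ a)) *
            Complex.ofReal (Real.exp (-(∑ i, Complex.normSq (d i)) / h))
          ∂volume ∂μ)
      = (∑ i, (starRingEnd ℂ) (η i) * χ i) *
          (((Real.pi * h : ℂ))⁻¹ *
            ∫ z : ℂ, ((starRingEnd ℂ) z) ^ l * g z * z ^ k *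
              Complex.ofReal (Real.exp (-(Complex.normSq z) / h)) ∂volume) :=
  stmt_16_general N μ h hh g hg C hgb k l χ η
end
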